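/- arXiv:1509.08045 — 3 statements merged into one kernel-verified Lean document; each statement's English description precedes it below -/
import Mathlib

section
/- For any ξ_m > 0, λ > 0, and μ ∈ (0, ξ_m], the zero-temperature doping-modified BCS equation ξ_m/λ = sqrt(ξ_m² + Δ²) − sqrt(μ² + Δ²) + μ·log((μ + sqrt(μ² + Δ²))/Δ) has exactly one solution Δ > 0. -/
/-!
Writing `F(Δ)` for the right-hand side, `F'(Δ) = Δ / √(ξ² + Δ²) - √(μ² + Δ²) / Δ`, which is
negative because the first term is at most `1` and the second exceeds `1` when `μ ≠ 0`; so `F`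
is strictly decreasing on `(0, ∞)`. Moreover `μ log (μ / Δ) - μ ≤ F(Δ) ≤ (ξ² + 2μ²) / Δ`, so `F`
takes every positive value, in particular `ξ / λ`, by the intermediate value theorem.
-/

open Real Set

lemma hasDerivAt_sqrt_sq_add_sq (c : ℝ) {x : ℝ} (hx : x ≠ 0) :
    HasDerivAt (fun y => √(c ^ 2 + y ^ 2)) (x / √(c ^ 2 + x ^ 2)) x := by
  have h := ((hasDerivAt_pow 2 x).const_add (c ^ 2)).sqrt (by positivity)
  refine h.congr_deriv ?_
  field_simp
  ring

lemma hasDerivAt_mul_log_add_sqrt_div (μ : ℝ) {x : ℝ} (hx : 0 < x) :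
    HasDerivAt (fun y => μ * log ((μ + √(μ ^ 2 + y ^ 2)) / y))
      (-(μ ^ 2 / (x * √(μ ^ 2 + x ^ 2)))) x := by
  have hsq : √(μ ^ 2 + x ^ 2) ^ 2 = μ ^ 2 + x ^ 2 := sq_sqrt (by positivity)
  have hμs : 0 < μ + √(μ ^ 2 + x ^ 2) := by
    nlinarith [abs_lt_of_sq_lt_sq' (by nlinarith : μ ^ 2 < √(μ ^ 2 + x ^ 2) ^ 2) (sqrt_nonneg _)]
  have h := ((((hasDerivAt_sqrt_sq_add_sq μ hx.ne').const_add μ).fun_div (hasDerivAt_id' x)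
    hx.ne').log (by positivity)).const_mul μ
  refine h.congr_deriv ?_
  field_simp
  linear_combination (-μ) * hsq

lemma existsUnique_mem_eq_of_strictAntiOn {f : ℝ → ℝ} {s : Set ℝ} {a b c : ℝ}
    (hs : s.OrdConnected) (hf : StrictAntiOn f s) (hfc : ContinuousOn f s)
    (ha : a ∈ s) (hb : b ∈ s) (hfa : c ≤ f a) (hfb : f b ≤ c) :
    ∃! x, x ∈ s ∧ f x = c := by
  obtain ⟨x, hx, hfx⟩ := intermediate_value_uIcc (hfc.mono (hs.uIcc_subset ha hb))
    (mem_uIcc.2 (Or.inr ⟨hfb, hfa⟩))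
  exact ⟨x, ⟨hs.uIcc_subset ha hb hx, hfx⟩,
    fun y ⟨hy, hfy⟩ => hf.injOn hy (hs.uIcc_subset ha hb hx) (hfy.trans hfx.symm)⟩

noncomputable def gapFun (ξ μ Δ : ℝ) : ℝ :=
  √(ξ ^ 2 + Δ ^ 2) - √(μ ^ 2 + Δ ^ 2) + μ * log ((μ + √(μ ^ 2 + Δ ^ 2)) / Δ)

lemma hasDerivAt_gapFun (ξ μ : ℝ) {x : ℝ} (hx : 0 < x) :
    HasDerivAt (gapFun ξ μ) (x / √(ξ ^ 2 + x ^ 2) - √(μ ^ 2 + x ^ 2) / x) x := by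
  have hsq : √(μ ^ 2 + x ^ 2) ^ 2 = μ ^ 2 + x ^ 2 := sq_sqrt (by positivity)
  refine (((hasDerivAt_sqrt_sq_add_sq ξ hx.ne').sub (hasDerivAt_sqrt_sq_add_sq μ hx.ne')).add
    (hasDerivAt_mul_log_add_sqrt_div μ hx)).congr_deriv ?_
  field_simp
  linear_combination √(ξ ^ 2 + x ^ 2) * hsq

lemma continuousOn_gapFun (ξ μ : ℝ) : ContinuousOn (gapFun ξ μ) (Ioi 0) :=
  fun _ hx => (hasDerivAt_gapFun ξ μ hx).continuousAt.continuousWithinAt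

lemma strictAntiOn_gapFun (ξ : ℝ) {μ : ℝ} (hμ : μ ≠ 0) : StrictAntiOn (gapFun ξ μ) (Ioi 0) :=
  strictAntiOn_of_deriv_neg (convex_Ioi 0) (continuousOn_gapFun ξ μ) fun x hx => by
    rw [interior_Ioi, mem_Ioi] at hx
    have hS : x / √(ξ ^ 2 + x ^ 2) ≤ 1 :=
      div_le_one_of_le₀ (le_sqrt_of_sq_le (by nlinarith [sq_nonneg ξ])) (sqrt_nonneg _)
    have hs : 1 < √(μ ^ 2 + x ^ 2) / x :=
      (one_lt_div hx).2 (lt_sqrt_of_sq_lt (by nlinarith [pow_pos (abs_pos.2 hμ) 2, sq_abs μ]))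
    rw [(hasDerivAt_gapFun ξ μ hx).deriv]
    linarith

lemma sqrt_sq_add_sq_le_add {c x : ℝ} (hc : 0 ≤ c) (hx : 0 ≤ x) : √(c ^ 2 + x ^ 2) ≤ c + x :=
  (sqrt_le_left (by positivity)).2 (by nlinarith)

lemma mul_log_div_sub_le_gapFun (ξ : ℝ) {μ x : ℝ} (hμ : 0 < μ) (hx : 0 < x) :
    μ * log (μ / x) - μ ≤ gapFun ξ μ x := by
  have hS : x ≤ √(ξ ^ 2 + x ^ 2) := le_sqrt_of_sq_le (by nlinarith [sq_nonneg ξ])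
  have hs := sqrt_sq_add_sq_le_add hμ.le hx.le
  have hlog : log (μ / x) ≤ log ((μ + √(μ ^ 2 + x ^ 2)) / x) :=
    log_le_log (by positivity) (by gcongr; linarith [sqrt_nonneg (μ ^ 2 + x ^ 2)])
  unfold gapFun
  nlinarith

lemma gapFun_le (ξ : ℝ) {μ x : ℝ} (hμ : 0 ≤ μ) (hx : 0 < x) :
    gapFun ξ μ x ≤ (ξ ^ 2 + 2 * μ ^ 2) / x := by
  have hSsq : √(ξ ^ 2 + x ^ 2) ^ 2 = ξ ^ 2 + x ^ 2 := sq_sqrt (by positivity)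
  have hS : x ≤ √(ξ ^ 2 + x ^ 2) := le_sqrt_of_sq_le (by nlinarith [sq_nonneg ξ])
  have hs : x ≤ √(μ ^ 2 + x ^ 2) := le_sqrt_of_sq_le (by nlinarith [sq_nonneg μ])
  have hs' := sqrt_sq_add_sq_le_add hμ hx.le
  have hlog : log ((μ + √(μ ^ 2 + x ^ 2)) / x) * x ≤ 2 * μ := by
    rw [← le_div_iff₀ hx]
    refine (log_le_sub_one_of_pos (by positivity)).trans ?_
    rw [div_sub_one hx.ne']
    gcongr
    linarith
  have hdiff : (√(ξ ^ 2 + x ^ 2) - √(μ ^ 2 + x ^ 2)) * x ≤ ξ ^ 2 := by nlinarith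
  unfold gapFun
  rw [le_div_iff₀ hx]
  nlinarith [mul_le_mul_of_nonneg_left hlog hμ]

theorem zero_temp_gap_exists_unique_general (ξm lam μ : ℝ) (hξ : 0 < ξm) (hlam : 0 < lam)
    (hμ0 : 0 < μ) :
    ∃! Δ : ℝ, 0 < Δ ∧
      ξm / lam = Real.sqrt (ξm ^ 2 + Δ ^ 2) - Real.sqrt (μ ^ 2 + Δ ^ 2)
        + μ * Real.log ((μ + Real.sqrt (μ ^ 2 + Δ ^ 2)) / Δ) := by
  set a := μ * exp (-(ξm / (lam * μ)) - 1)
  set b := lam * (ξm ^ 2 + 2 * μ ^ 2) / ξm with hb_def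
  have ha : 0 < a := by positivity
  have hb : 0 < b := by positivity
  have hfa : ξm / lam ≤ gapFun ξm μ a := by
    have hlog : log (μ / a) = ξm / (lam * μ) + 1 := by
      rw [div_mul_cancel_left₀ hμ0.ne', ← exp_neg, neg_sub, sub_neg_eq_add, log_exp]
      ring
    calc ξm / lam = μ * log (μ / a) - μ := by rw [hlog]; field_simp; ring
      _ ≤ gapFun ξm μ a := mul_log_div_sub_le_gapFun ξm hμ0 ha
  have hfb : gapFun ξm μ b ≤ ξm / lam :=
    (gapFun_le ξm hμ0.le hb).trans_eq (by rw [hb_def]; field_simp)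
  simpa only [gapFun, mem_Ioi, eq_comm] using
    existsUnique_mem_eq_of_strictAntiOn ordConnected_Ioi (strictAntiOn_gapFun ξm hμ0.ne')
      (continuousOn_gapFun ξm μ) ha hb hfa hfb

theorem zero_temp_gap_exists_unique (ξm lam μ : ℝ) (hξ : 0 < ξm) (hlam : 0 < lam)
    (hμ0 : 0 < μ) (hμ : μ ≤ ξm) :
    ∃! Δ : ℝ, 0 < Δ ∧
      ξm / lam = Real.sqrt (ξm ^ 2 + Δ ^ 2) - Real.sqrt (μ ^ 2 + Δ ^ 2)
        + μ * Real.log ((μ + Real.sqrt (μ ^ 2 + Δ ^ 2)) / Δ) :=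
  zero_temp_gap_exists_unique_general ξm lam μ hξ hlam hμ0
end

section
/- For ξ_m > 0 and μ ∈ (0, ξ_m], the third derivative of g(u) = u·(sqrt(ξ_m² + u²) − sqrt(μ² + u²) + μ·log((μ + sqrt(μ² + u²))/u)) is g'''(u) = 3ξ_m⁴/(ξ_m² + u²)^{5/2} + μ⁴/(u²(μ² + u²)^{3/2}), which is strictly positive for all u > 0. -/
/-!
Write `s = √(a² + u²)`, so that `s² = a² + u²` and `(log ((a + s) / u))' = -a / (u s)`.
The function is `u √(ξ² + u²) - G_μ(u)` with `G_a(u) = u s - a u log ((a + s) / u)`. Both pieces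
differentiate three times within rational functions of `u` and `s`, and eliminating `s²` collapses
the third derivatives to `3 ξ⁴ / √(ξ² + u²)⁵` and `-μ⁴ / (u² √(μ² + u²)³)`.
-/

open Real Filter

lemma iteratedDeriv_succ_eq_of_hasDerivAt {𝕜 F : Type*} [NontriviallyNormedField 𝕜]
    [NormedAddCommGroup F] [NormedSpace 𝕜 F] {f f' : 𝕜 → F} {s : Set 𝕜} (hs : IsOpen s)
    (hf : ∀ x ∈ s, HasDerivAt f (f' x) x) (n : ℕ) {x : 𝕜} (hx : x ∈ s) :
    iteratedDeriv (n + 1) f x = iteratedDeriv n f' x := by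
  rw [iteratedDeriv_succ']
  exact EventuallyEq.iteratedDeriv_eq n <|
    eventually_of_mem (hs.mem_nhds hx) fun y hy => (hf y hy).deriv

section

variable (a : ℝ) {u : ℝ}

lemma hasDerivAt_sqrt_sq_add_sq_s9 (h : a ^ 2 + u ^ 2 ≠ 0) :
    HasDerivAt (fun u => √(a ^ 2 + u ^ 2)) (u / √(a ^ 2 + u ^ 2)) u := by
  have hsq : HasDerivAt (fun u : ℝ => a ^ 2 + u ^ 2) (2 * u) u := by
    simpa using (hasDerivAt_pow 2 u).const_add (a ^ 2)
  refine (hsq.sqrt h).congr_deriv ?_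
  field_simp

lemma add_sqrt_sq_add_sq_pos (hu : u ≠ 0) : 0 < a + √(a ^ 2 + u ^ 2) := by
  have : |a| < √(a ^ 2 + u ^ 2) :=
    lt_sqrt_of_sq_lt (by rw [sq_abs]; exact lt_add_of_pos_right _ (by positivity))
  linarith [neg_abs_le a]

lemma hasDerivAt_log_add_sqrt_sq_add_sq_div (hu : u ≠ 0) :
    HasDerivAt (fun u => log ((a + √(a ^ 2 + u ^ 2)) / u)) (-a / (u * √(a ^ 2 + u ^ 2))) u := by
  have hsum := add_sqrt_sq_add_sq_pos a hu
  have hs : 0 < √(a ^ 2 + u ^ 2) := sqrt_pos.2 (by positivity)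
  have hs2 : √(a ^ 2 + u ^ 2) ^ 2 = a ^ 2 + u ^ 2 := sq_sqrt (by positivity)
  have hq := (((hasDerivAt_sqrt_sq_add_sq_s9 a (by positivity)).const_add a).div
    (hasDerivAt_id' u) hu).log (div_ne_zero hsum.ne' hu)
  refine hq.congr_deriv ?_
  simp only [Pi.div_apply]
  field_simp
  linear_combination -hs2

lemma hasDerivAt_mul_sqrt_sq_add_sq (h : a ^ 2 + u ^ 2 ≠ 0) :
    HasDerivAt (fun u => u * √(a ^ 2 + u ^ 2)) ((a ^ 2 + 2 * u ^ 2) / √(a ^ 2 + u ^ 2)) u := by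
  have hs : 0 < √(a ^ 2 + u ^ 2) := sqrt_pos.2 (lt_of_le_of_ne (by positivity) h.symm)
  have hs2 : √(a ^ 2 + u ^ 2) ^ 2 = a ^ 2 + u ^ 2 := sq_sqrt (by positivity)
  refine ((hasDerivAt_id' u).mul (hasDerivAt_sqrt_sq_add_sq_s9 a h)).congr_deriv ?_
  field_simp
  linear_combination hs2

lemma hasDerivAt_mul_sqrt_sq_add_sq_deriv (h : a ^ 2 + u ^ 2 ≠ 0) :
    HasDerivAt (fun u => (a ^ 2 + 2 * u ^ 2) / √(a ^ 2 + u ^ 2))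
      (u * (3 * a ^ 2 + 2 * u ^ 2) / √(a ^ 2 + u ^ 2) ^ 3) u := by
  have hs : 0 < √(a ^ 2 + u ^ 2) := sqrt_pos.2 (lt_of_le_of_ne (by positivity) h.symm)
  have hs2 : √(a ^ 2 + u ^ 2) ^ 2 = a ^ 2 + u ^ 2 := sq_sqrt (by positivity)
  have hnum := ((hasDerivAt_pow 2 u).const_mul 2).const_add (a ^ 2)
  refine (hnum.div (hasDerivAt_sqrt_sq_add_sq_s9 a h) hs.ne').congr_deriv ?_
  field_simp
  linear_combination 4 * u * hs2

lemma hasDerivAt_mul_sqrt_sq_add_sq_deriv2 (h : a ^ 2 + u ^ 2 ≠ 0) :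
    HasDerivAt (fun u => u * (3 * a ^ 2 + 2 * u ^ 2) / √(a ^ 2 + u ^ 2) ^ 3)
      (3 * a ^ 4 / √(a ^ 2 + u ^ 2) ^ 5) u := by
  have hs : 0 < √(a ^ 2 + u ^ 2) := sqrt_pos.2 (lt_of_le_of_ne (by positivity) h.symm)
  have hs2 : √(a ^ 2 + u ^ 2) ^ 2 = a ^ 2 + u ^ 2 := sq_sqrt (by positivity)
  have hnum := (hasDerivAt_id' u).fun_mul (((hasDerivAt_pow 2 u).const_mul 2).const_add (3 * a ^ 2))
  refine (hnum.div ((hasDerivAt_sqrt_sq_add_sq_s9 a h).fun_pow 3) (by positivity)).congr_deriv ?_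
  field_simp
  linear_combination √(a ^ 2 + u ^ 2) ^ 2 * (3 * a ^ 2 + 6 * u ^ 2) * hs2

lemma hasDerivAt_mul_sqrt_sub_mul_log (hu : u ≠ 0) :
    HasDerivAt (fun u => u * √(a ^ 2 + u ^ 2) - a * u * log ((a + √(a ^ 2 + u ^ 2)) / u))
      (2 * √(a ^ 2 + u ^ 2) - a * log ((a + √(a ^ 2 + u ^ 2)) / u)) u := by
  have h : a ^ 2 + u ^ 2 ≠ 0 := by positivity
  have hs : 0 < √(a ^ 2 + u ^ 2) := sqrt_pos.2 (by positivity)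
  have hs2 : √(a ^ 2 + u ^ 2) ^ 2 = a ^ 2 + u ^ 2 := sq_sqrt (by positivity)
  refine ((hasDerivAt_mul_sqrt_sq_add_sq a h).sub (((hasDerivAt_id' u).const_mul a).fun_mul
    (hasDerivAt_log_add_sqrt_sq_add_sq_div a hu))).congr_deriv ?_
  field_simp
  linear_combination -2 * hs2

lemma hasDerivAt_mul_sqrt_sub_mul_log_deriv (hu : u ≠ 0) :
    HasDerivAt (fun u => 2 * √(a ^ 2 + u ^ 2) - a * log ((a + √(a ^ 2 + u ^ 2)) / u))
      ((a ^ 2 + 2 * u ^ 2) / (u * √(a ^ 2 + u ^ 2))) u := by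
  have hs : 0 < √(a ^ 2 + u ^ 2) := sqrt_pos.2 (by positivity)
  refine (((hasDerivAt_sqrt_sq_add_sq_s9 a (by positivity)).const_mul 2).sub
    ((hasDerivAt_log_add_sqrt_sq_add_sq_div a hu).const_mul a)).congr_deriv ?_
  field_simp
  ring

lemma hasDerivAt_mul_sqrt_sub_mul_log_deriv2 (hu : u ≠ 0) :
    HasDerivAt (fun u => (a ^ 2 + 2 * u ^ 2) / (u * √(a ^ 2 + u ^ 2)))
      (-a ^ 4 / (u ^ 2 * √(a ^ 2 + u ^ 2) ^ 3)) u := by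
  have hs : 0 < √(a ^ 2 + u ^ 2) := sqrt_pos.2 (by positivity)
  have hs2 : √(a ^ 2 + u ^ 2) ^ 2 = a ^ 2 + u ^ 2 := sq_sqrt (by positivity)
  have hnum := ((hasDerivAt_pow 2 u).const_mul 2).const_add (a ^ 2)
  have hden := (hasDerivAt_id' u).fun_mul (hasDerivAt_sqrt_sq_add_sq_s9 a (by positivity))
  refine (hnum.div hden (by positivity)).congr_deriv ?_
  field_simp
  linear_combination (2 * u ^ 2 - a ^ 2) * hs2

end

theorem zero_temp_g_third_deriv_general (ξm μ : ℝ) (hξ : 0 < ξm) :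
    ∀ u : ℝ, 0 < u →
      iteratedDeriv 3 (fun u : ℝ =>
          u * (Real.sqrt (ξm ^ 2 + u ^ 2) - Real.sqrt (μ ^ 2 + u ^ 2)
            + μ * Real.log ((μ + Real.sqrt (μ ^ 2 + u ^ 2)) / u))) u
        = 3 * ξm ^ 4 / (ξm ^ 2 + u ^ 2) ^ ((5 : ℝ) / 2)
          + μ ^ 4 / (u ^ 2 * (μ ^ 2 + u ^ 2) ^ ((3 : ℝ) / 2)) ∧
      0 < 3 * ξm ^ 4 / (ξm ^ 2 + u ^ 2) ^ ((5 : ℝ) / 2)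
          + μ ^ 4 / (u ^ 2 * (μ ^ 2 + u ^ 2) ^ ((3 : ℝ) / 2)) := by
  intro u hu
  refine ⟨?_, by positivity⟩
  have hsplit : (fun u : ℝ => u * (√(ξm ^ 2 + u ^ 2) - √(μ ^ 2 + u ^ 2)
      + μ * log ((μ + √(μ ^ 2 + u ^ 2)) / u))) = fun u => u * √(ξm ^ 2 + u ^ 2)
        - (u * √(μ ^ 2 + u ^ 2) - μ * u * log ((μ + √(μ ^ 2 + u ^ 2)) / u)) := by
    funext v; ring
  have hne : ∀ v ∈ Set.Ioi (0 : ℝ), v ≠ 0 := fun v hv => hv.ne'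
  have hne' : ∀ v ∈ Set.Ioi (0 : ℝ), ξm ^ 2 + v ^ 2 ≠ 0 := fun v hv => by positivity
  rw [hsplit]
  refine (iteratedDeriv_succ_eq_of_hasDerivAt isOpen_Ioi (fun v hv =>
      (hasDerivAt_mul_sqrt_sq_add_sq ξm (hne' v hv)).fun_sub
        (hasDerivAt_mul_sqrt_sub_mul_log μ (hne v hv))) 2 hu).trans ?_
  refine (iteratedDeriv_succ_eq_of_hasDerivAt isOpen_Ioi (fun v hv =>
      (hasDerivAt_mul_sqrt_sq_add_sq_deriv ξm (hne' v hv)).fun_sub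
        (hasDerivAt_mul_sqrt_sub_mul_log_deriv μ (hne v hv))) 1 hu).trans ?_
  rw [iteratedDeriv_one, ((hasDerivAt_mul_sqrt_sq_add_sq_deriv2 ξm (hne' u hu)).fun_sub
      (hasDerivAt_mul_sqrt_sub_mul_log_deriv2 μ (hne u hu))).deriv,
    rpow_div_two_eq_sqrt _ (by positivity), rpow_div_two_eq_sqrt _ (by positivity),
    rpow_ofNat, rpow_ofNat]
  ring

theorem zero_temp_g_third_deriv (ξm μ : ℝ) (hξ : 0 < ξm) (hμ0 : 0 < μ) (hμ : μ ≤ ξm) :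
    ∀ u : ℝ, 0 < u →
      iteratedDeriv 3 (fun u : ℝ =>
          u * (Real.sqrt (ξm ^ 2 + u ^ 2) - Real.sqrt (μ ^ 2 + u ^ 2)
            + μ * Real.log ((μ + Real.sqrt (μ ^ 2 + u ^ 2)) / u))) u
        = 3 * ξm ^ 4 / (ξm ^ 2 + u ^ 2) ^ ((5 : ℝ) / 2)
          + μ ^ 4 / (u ^ 2 * (μ ^ 2 + u ^ 2) ^ ((3 : ℝ) / 2)) ∧
      0 < 3 * ξm ^ 4 / (ξm ^ 2 + u ^ 2) ^ ((5 : ℝ) / 2)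
          + μ ^ 4 / (u ^ 2 * (μ ^ 2 + u ^ 2) ^ ((3 : ℝ) / 2)) :=
  zero_temp_g_third_deriv_general ξm μ hξ
end

section
/- For fixed Δ ≥ 0, ξ_m > 0, μ ∈ [0, ξ_m], the function f(T) = 2T·log(cosh(sqrt(ξ_m² + Δ²)/(2T))/cosh(sqrt(μ² + Δ²)/(2T))) + μ·∫₀^μ tanh(sqrt(ξ² + Δ²)/(2T))/sqrt(ξ² + Δ²) dξ is strictly decreasing in T on (0, ∞) provided μ < ξ_m. -/
/-!
With `c = 2T`, `a = √(ξ_m² + Δ²)` and `b = √(μ² + Δ²) < a`, the logarithmic term equals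
`∫ x in b..a, tanh (x / c)`, because `tanh` is the logarithmic derivative of `cosh`. Its integrand
strictly decreases in `c` for `x > 0`, so this term is strictly decreasing. The integrand
`tanh (s / c) / s` of the second term is nonincreasing in `c` and bounded by `1 / c` (as
`|tanh y| ≤ |y|`), so that term is nonincreasing.
-/

open Real Set intervalIntegral MeasureTheory

namespace Real

lemma continuous_tanh : Continuous tanh := by
  rw [show tanh = fun x => sinh x / cosh x from funext tanh_eq_sinh_div_cosh]
  exact continuous_sinh.div continuous_cosh fun x => (cosh_pos x).ne'

lemma tanh_strictMono : StrictMono tanh := by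
  intro x y hxy
  by_contra! hle
  have h := artanh_le_artanh (neg_one_lt_tanh y) (tanh_lt_one x) hle
  rw [artanh_tanh, artanh_tanh] at h
  linarith

lemma sinh_le_mul_cosh {y : ℝ} (hy : 0 ≤ y) : sinh y ≤ y * cosh y := by
  rcases hy.eq_or_lt with rfl | hy
  · simp
  obtain ⟨c, hc, hslope⟩ := exists_hasDerivAt_eq_slope sinh cosh hy
    continuous_sinh.continuousOn fun x _ => hasDerivAt_sinh x
  have hcosh : cosh c ≤ cosh y := cosh_le_cosh.2 <| by
    rw [abs_of_pos hc.1, abs_of_pos hy]; exact hc.2.le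
  rw [sinh_zero, sub_zero, sub_zero, eq_div_iff hy.ne'] at hslope
  nlinarith

lemma tanh_le_self {y : ℝ} (hy : 0 ≤ y) : tanh y ≤ y := by
  rw [tanh_eq_sinh_div_cosh, div_le_iff₀ (cosh_pos y)]
  exact sinh_le_mul_cosh hy

lemma abs_tanh_le_abs (y : ℝ) : |tanh y| ≤ |y| := by
  have key : ∀ y, 0 ≤ y → |tanh y| ≤ |y| := fun y hy => by
    have htanh : 0 ≤ tanh y := tanh_zero ▸ tanh_strictMono.monotone hy
    rw [abs_of_nonneg htanh, abs_of_nonneg hy]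
    exact tanh_le_self hy
  rcases le_total 0 y with hy | hy
  · exact key y hy
  · simpa only [tanh_neg, abs_neg] using key (-y) (neg_nonneg.2 hy)

lemma hasDerivAt_mul_log_cosh_div {c : ℝ} (hc : c ≠ 0) (x : ℝ) :
    HasDerivAt (fun x => c * log (cosh (x / c))) (tanh (x / c)) x := by
  have h := (((hasDerivAt_id' x).div_const c).cosh.log (cosh_pos _).ne').const_mul c
  refine h.congr_deriv ?_
  rw [tanh_eq_sinh_div_cosh]
  field_simp

end Real

lemma mul_log_cosh_div_cosh_eq_integral {c : ℝ} (hc : c ≠ 0) (a b : ℝ) :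
    c * log (cosh (a / c) / cosh (b / c)) = ∫ x in b..a, tanh (x / c) := by
  rw [integral_eq_sub_of_hasDerivAt (fun x _ => hasDerivAt_mul_log_cosh_div hc x)
    ((continuous_tanh.comp (continuous_id.div_const c)).intervalIntegrable _ _),
    log_div (cosh_pos _).ne' (cosh_pos _).ne']
  ring

lemma tanh_div_le_tanh_div {x c₁ c₂ : ℝ} (hx : 0 ≤ x) (hc₁ : 0 < c₁)
    (hc : c₁ ≤ c₂) : tanh (x / c₂) ≤ tanh (x / c₁) :=
  tanh_strictMono.monotone (div_le_div_of_nonneg_left hx hc₁ hc)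

lemma strictAntiOn_integral_tanh_div {a b : ℝ} (hb : 0 ≤ b) (hba : b < a) :
    StrictAntiOn (fun c => ∫ x in b..a, tanh (x / c)) (Ioi 0) := by
  intro c₁ hc₁ c₂ _ hc
  have hcont : ∀ c : ℝ, ContinuousOn (fun x => tanh (x / c)) (Icc b a) := fun c =>
    (continuous_tanh.comp (continuous_id.div_const c)).continuousOn
  refine integral_lt_integral_of_continuousOn_of_le_of_exists_lt hba (hcont c₂) (hcont c₁)
    (fun x hx => tanh_div_le_tanh_div (hb.trans hx.1.le) hc₁ hc.le)
    ⟨a, right_mem_Icc.2 hba.le, ?_⟩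
  exact tanh_strictMono (div_lt_div_of_pos_left (hb.trans_lt hba) hc₁ hc)

lemma strictAntiOn_mul_log_cosh_div_cosh {a b : ℝ} (hb : 0 ≤ b) (hba : b < a) :
    StrictAntiOn (fun c => c * log (cosh (a / c) / cosh (b / c))) (Ioi 0) :=
  (strictAntiOn_integral_tanh_div hb hba).congr fun _ hc =>
    (mul_log_cosh_div_cosh_eq_integral (ne_of_gt hc) a b).symm

lemma abs_tanh_div_div_le (s : ℝ) {c : ℝ} (hc : 0 < c) : |tanh (s / c) / s| ≤ c⁻¹ := by
  rcases eq_or_ne s 0 with rfl | hs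
  · simpa using hc.le
  rw [abs_div, div_le_iff₀ (abs_pos.2 hs)]
  calc |tanh (s / c)| ≤ |s / c| := abs_tanh_le_abs _
    _ = c⁻¹ * |s| := by rw [abs_div, abs_of_pos hc, div_eq_inv_mul]

lemma intervalIntegrable_tanh_div_div {f : ℝ → ℝ} (hf : Measurable f) {c : ℝ} (hc : 0 < c)
    (a b : ℝ) : IntervalIntegrable (fun ξ => tanh (f ξ / c) / f ξ) volume a b := by
  refine (intervalIntegrable_const (c := c⁻¹)).mono_fun' ?_ ?_
  · exact ((continuous_tanh.measurable.comp (hf.div_const c)).div hf).aestronglyMeasurable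
  · exact Filter.Eventually.of_forall fun ξ => abs_tanh_div_div_le (f ξ) hc

lemma antitoneOn_integral_tanh_div_div {f : ℝ → ℝ} (hf : Measurable f)
    (hf₀ : ∀ ξ, 0 ≤ f ξ) {a b : ℝ} (hab : a ≤ b) :
    AntitoneOn (fun c => ∫ ξ in a..b, tanh (f ξ / c) / f ξ) (Ioi 0) := by
  intro c₁ hc₁ c₂ hc₂ hc
  refine integral_mono_on hab (intervalIntegrable_tanh_div_div hf hc₂ a b)
    (intervalIntegrable_tanh_div_div hf hc₁ a b) fun ξ _ => ?_
  exact div_le_div_of_nonneg_right (tanh_div_le_tanh_div (hf₀ ξ) hc₁ hc) (hf₀ ξ)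

theorem finite_temp_rhs_strictAnti_in_T_general (Δ ξm μ : ℝ)
    (hμ0 : 0 ≤ μ) (hμ : μ < ξm) :
    StrictAntiOn (fun T : ℝ =>
      2 * T * Real.log (Real.cosh (Real.sqrt (ξm ^ 2 + Δ ^ 2) / (2 * T))
          / Real.cosh (Real.sqrt (μ ^ 2 + Δ ^ 2) / (2 * T)))
        + μ * ∫ ξ in (0 : ℝ)..μ,
            Real.tanh (Real.sqrt (ξ ^ 2 + Δ ^ 2) / (2 * T)) / Real.sqrt (ξ ^ 2 + Δ ^ 2))
      (Set.Ioi 0) := by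
  have hba : √(μ ^ 2 + Δ ^ 2) < √(ξm ^ 2 + Δ ^ 2) :=
    sqrt_lt_sqrt (by positivity) (by nlinarith)
  have hlog := strictAntiOn_mul_log_cosh_div_cosh (sqrt_nonneg _) hba
  have hint := antitoneOn_integral_tanh_div_div
    (by fun_prop : Measurable fun ξ : ℝ => √(ξ ^ 2 + Δ ^ 2)) (fun _ => sqrt_nonneg _) hμ0
  have hsum := hlog.add_antitone fun c₁ hc₁ c₂ hc₂ hc =>
    mul_le_mul_of_nonneg_left (hint hc₁ hc₂ hc) hμ0
  exact hsum.comp_strictMonoOn ((strictMono_mul_left_of_pos two_pos).strictMonoOn _)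
    fun _ hT => mem_Ioi.2 (mul_pos two_pos hT)

theorem finite_temp_rhs_strictAnti_in_T (Δ ξm μ : ℝ) (hΔ : 0 ≤ Δ) (hξ : 0 < ξm)
    (hμ0 : 0 ≤ μ) (hμ : μ < ξm) :
    StrictAntiOn (fun T : ℝ =>
      2 * T * Real.log (Real.cosh (Real.sqrt (ξm ^ 2 + Δ ^ 2) / (2 * T))
          / Real.cosh (Real.sqrt (μ ^ 2 + Δ ^ 2) / (2 * T)))
        + μ * ∫ ξ in (0 : ℝ)..μ,
            Real.tanh (Real.sqrt (ξ ^ 2 + Δ ^ 2) / (2 * T)) / Real.sqrt (ξ ^ 2 + Δ ^ 2))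
      (Set.Ioi 0) :=
  finite_temp_rhs_strictAnti_in_T_general Δ ξm μ hμ0 hμ
end
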